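/- Let L be a Lie algebra over a field k with k-subspaces L₋₁, L₀, L₁ satisfying L = L₋₁ + L₀ + L₁ and ⁅Lᵢ, Lⱼ⁆ ⊆ L_{i+j} (where L_m = 0 for |m| ≥ 2), and let V be a module over the Lie algebra L. Let W ⊆ V be a k-subspace with L₀·W ⊆ W and L₋₁·W = 0. Define inductively W₀ := W and W_{j+1} := span_k { z·w : z ∈ L₁, w ∈ Wⱼ }. Then the subspace U := Σ_{j ≥ 0} Wⱼ is an L-submodule of V, i.e. x·u ∈ U for all x ∈ L and u ∈ U. In particular, if V is an irreducible L-module (its only L-submodules are 0 and V) and W ≠ 0, then U = V. -/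

import Mathlib

/-!
Every `Wⱼ` is stable under `L₀` and is sent into `Wⱼ₋₁` by `L₋₁` (and `W₀` to `0`), while `L₁`
sends `Wⱼ` into `Wⱼ₊₁` by construction. Both facts follow by induction on `j` from the Leibniz
rule `x·(z·w) = ⁅x, z⁆·w + z·(x·w)` with `z ∈ L₁`, because `⁅L₀, L₁⁆ ⊆ L₁` and `⁅L₋₁, L₁⁆ ⊆ L₀`.
Hence `U = Σⱼ Wⱼ` is stable under the three pieces, which span `L`. If `V` is irreducible, `U`
contains `W ≠ 0`, so `U = V`.
-/

/-- The inductively defined sequence of subspaces `W₀ := W`,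
`W_{j+1} := span { z·w : z ∈ L₁, w ∈ Wⱼ }`. -/
def Wseq (k L V : Type*) [Field k] [LieRing L] [LieAlgebra k L]
    [AddCommGroup V] [Module k V] [LieRingModule L V] [LieModule k L V]
    (Lpos : Submodule k L) (W : Submodule k V) : ℕ → Submodule k V
  | 0 => W
  | j + 1 => Submodule.span k {v : V | ∃ z ∈ Lpos, ∃ w ∈ Wseq k L V Lpos W j, ⁅z, w⁆ = v}

theorem LieModule.lie_mem_of_span_eq_top {k L V : Type*} [CommRing k] [LieRing L]
    [LieAlgebra k L] [AddCommGroup V] [Module k V] [LieRingModule L V] [LieModule k L V]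
    {s : Set L} (hs : Submodule.span k s = ⊤) {U : Submodule k V}
    (h : ∀ x ∈ s, ∀ u ∈ U, ⁅x, u⁆ ∈ U) (x : L) {u : V} (hu : u ∈ U) : ⁅x, u⁆ ∈ U := by
  have hstab : Submodule.span k s ≤
      (U.compatibleMaps U).comap (LieModule.toEnd k L V : L →ₗ[k] Module.End k V) :=
    Submodule.span_le.2 fun y hy _ hv ↦ h y hy _ hv
  exact (hs ▸ hstab) Submodule.mem_top hu

namespace Wseq

variable {k L V : Type*} [Field k] [LieRing L] [LieAlgebra k L]
    [AddCommGroup V] [Module k V] [LieRingModule L V] [LieModule k L V]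
    {Lneg Lzero Lpos : Submodule k L} {W : Submodule k V}

theorem lie_mem_succ {j : ℕ} {z : L} (hz : z ∈ Lpos) {w : V} (hw : w ∈ Wseq k L V Lpos W j) :
    ⁅z, w⁆ ∈ Wseq k L V Lpos W (j + 1) :=
  Submodule.subset_span ⟨z, hz, w, hw, rfl⟩

theorem succ_le_comap_toEnd {j : ℕ} {x : L} {P : Submodule k V}
    (h : ∀ z ∈ Lpos, ∀ w ∈ Wseq k L V Lpos W j, ⁅x, ⁅z, w⁆⁆ ∈ P) :
    Wseq k L V Lpos W (j + 1) ≤ P.comap (LieModule.toEnd k L V x) :=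
  Submodule.span_le.2 fun _ ⟨z, hz, w, hw, hzw⟩ ↦ hzw ▸ h z hz w hw

theorem le_comap_toEnd_of_mem_zero (hzp : ∀ x ∈ Lzero, ∀ y ∈ Lpos, ⁅x, y⁆ ∈ Lpos)
    (hWzero : ∀ x ∈ Lzero, ∀ w ∈ W, ⁅x, w⁆ ∈ W) (j : ℕ) {x : L} (hx : x ∈ Lzero) :
    Wseq k L V Lpos W j ≤ (Wseq k L V Lpos W j).comap (LieModule.toEnd k L V x) := by
  induction j generalizing x with
  | zero => exact hWzero x hx
  | succ j ih =>
    refine succ_le_comap_toEnd fun z hz w hw ↦ ?_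
    rw [leibniz_lie]
    exact add_mem (lie_mem_succ (hzp x hx z hz) hw) (lie_mem_succ hz (ih hx hw))

theorem succ_le_comap_toEnd_of_mem_neg (hnp : ∀ x ∈ Lneg, ∀ y ∈ Lpos, ⁅x, y⁆ ∈ Lzero)
    (hzp : ∀ x ∈ Lzero, ∀ y ∈ Lpos, ⁅x, y⁆ ∈ Lpos)
    (hWzero : ∀ x ∈ Lzero, ∀ w ∈ W, ⁅x, w⁆ ∈ W)
    (hWneg : ∀ x ∈ Lneg, ∀ w ∈ W, ⁅x, w⁆ = (0 : V)) (j : ℕ) {x : L} (hx : x ∈ Lneg) :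
    Wseq k L V Lpos W (j + 1) ≤ (Wseq k L V Lpos W j).comap (LieModule.toEnd k L V x) := by
  induction j generalizing x with
  | zero =>
    refine succ_le_comap_toEnd fun z hz w hw ↦ ?_
    rw [leibniz_lie, hWneg x hx w hw, lie_zero, add_zero]
    exact hWzero _ (hnp x hx z hz) w hw
  | succ j ih =>
    refine succ_le_comap_toEnd fun z hz w hw ↦ ?_
    rw [leibniz_lie]
    exact add_mem (le_comap_toEnd_of_mem_zero hzp hWzero _ (hnp x hx z hz) hw)
      (lie_mem_succ hz (ih hx hw))

theorem lie_mem_iSup (hsum : Lneg ⊔ Lzero ⊔ Lpos = ⊤)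
    (hnp : ∀ x ∈ Lneg, ∀ y ∈ Lpos, ⁅x, y⁆ ∈ Lzero)
    (hzp : ∀ x ∈ Lzero, ∀ y ∈ Lpos, ⁅x, y⁆ ∈ Lpos)
    (hWzero : ∀ x ∈ Lzero, ∀ w ∈ W, ⁅x, w⁆ ∈ W)
    (hWneg : ∀ x ∈ Lneg, ∀ w ∈ W, ⁅x, w⁆ = (0 : V)) (x : L) {u : V}
    (hu : u ∈ ⨆ j, Wseq k L V Lpos W j) : ⁅x, u⁆ ∈ ⨆ j, Wseq k L V Lpos W j := by
  set U := ⨆ j, Wseq k L V Lpos W j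
  have hspan : Submodule.span k ((Lneg : Set L) ∪ Lzero ∪ Lpos) = ⊤ := by
    rwa [Submodule.span_union, Submodule.span_union, Submodule.span_eq, Submodule.span_eq,
      Submodule.span_eq]
  have hle (j : ℕ) : Wseq k L V Lpos W j ≤ U := le_iSup _ j
  refine LieModule.lie_mem_of_span_eq_top hspan (fun y hy v hv ↦ ?_) x hu
  suffices U ≤ U.comap (LieModule.toEnd k L V y) from this hv
  refine iSup_le fun j ↦ ?_
  rcases hy with (hy | hy) | hy
  · cases j with
    | zero => exact fun w hw ↦ show ⁅y, w⁆ ∈ U from hWneg y hy w hw ▸ U.zero_mem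
    | succ j =>
      exact (succ_le_comap_toEnd_of_mem_neg hnp hzp hWzero hWneg j hy).trans
        (Submodule.comap_mono (hle j))
  · exact (le_comap_toEnd_of_mem_zero hzp hWzero j hy).trans (Submodule.comap_mono (hle j))
  · exact fun w hw ↦ hle (j + 1) (lie_mem_succ hy hw)

end Wseq

theorem stmt_9_general (k L V : Type*) [Field k] [LieRing L] [LieAlgebra k L]
    [AddCommGroup V] [Module k V] [LieRingModule L V] [LieModule k L V]
    (Lneg Lzero Lpos : Submodule k L)
    (hsum : Lneg ⊔ Lzero ⊔ Lpos = ⊤)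
    (hnp : ∀ x ∈ Lneg, ∀ y ∈ Lpos, ⁅x, y⁆ ∈ Lzero)
    (hzp : ∀ x ∈ Lzero, ∀ y ∈ Lpos, ⁅x, y⁆ ∈ Lpos)
    (W : Submodule k V)
    (hWzero : ∀ x ∈ Lzero, ∀ w ∈ W, ⁅x, w⁆ ∈ W)
    (hWneg : ∀ x ∈ Lneg, ∀ w ∈ W, ⁅x, w⁆ = (0 : V)) :
    (∀ x : L, ∀ u ∈ ⨆ j : ℕ, Wseq k L V Lpos W j, ⁅x, u⁆ ∈ ⨆ j : ℕ, Wseq k L V Lpos W j) ∧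
    ((∀ U' : Submodule k V, (∀ x : L, ∀ v ∈ U', ⁅x, v⁆ ∈ U') → U' = ⊥ ∨ U' = ⊤) →
      W ≠ ⊥ → (⨆ j : ℕ, Wseq k L V Lpos W j) = ⊤) := by
  have hstable : ∀ x : L, ∀ u ∈ ⨆ j : ℕ, Wseq k L V Lpos W j,
      ⁅x, u⁆ ∈ ⨆ j : ℕ, Wseq k L V Lpos W j :=
    fun x _ hu ↦ Wseq.lie_mem_iSup hsum hnp hzp hWzero hWneg x hu
  refine ⟨hstable, fun hirr hW ↦ (hirr _ hstable).resolve_left fun hbot ↦ hW ?_⟩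
  exact le_bot_iff.mp (hbot ▸ le_iSup (Wseq k L V Lpos W) 0)

/-- Let `L = L₋₁ + L₀ + L₁` be a graded Lie algebra over a field `k`
with `⁅Lᵢ, Lⱼ⁆ ⊆ L_{i+j}`, let `V` be an `L`-module and `W ⊆ V` a subspace with
`L₀·W ⊆ W` and `L₋₁·W = 0`.  With `W₀ := W` and `W_{j+1} := span { z·w : z ∈ L₁, w ∈ Wⱼ }`,
the subspace `U := Σ_{j ≥ 0} Wⱼ` is an `L`-submodule of `V`.  In particular, if `V` is
irreducible and `W ≠ 0`, then `U = V`. -/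
theorem stmt_9 (k L V : Type*) [Field k] [LieRing L] [LieAlgebra k L]
    [AddCommGroup V] [Module k V] [LieRingModule L V] [LieModule k L V]
    (Lneg Lzero Lpos : Submodule k L)
    (hsum : Lneg ⊔ Lzero ⊔ Lpos = ⊤)
    (hnn : ∀ x ∈ Lneg, ∀ y ∈ Lneg, ⁅x, y⁆ = (0 : L))
    (hnz : ∀ x ∈ Lneg, ∀ y ∈ Lzero, ⁅x, y⁆ ∈ Lneg)
    (hnp : ∀ x ∈ Lneg, ∀ y ∈ Lpos, ⁅x, y⁆ ∈ Lzero)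
    (hzz : ∀ x ∈ Lzero, ∀ y ∈ Lzero, ⁅x, y⁆ ∈ Lzero)
    (hzp : ∀ x ∈ Lzero, ∀ y ∈ Lpos, ⁅x, y⁆ ∈ Lpos)
    (hpp : ∀ x ∈ Lpos, ∀ y ∈ Lpos, ⁅x, y⁆ = (0 : L))
    (W : Submodule k V)
    (hWzero : ∀ x ∈ Lzero, ∀ w ∈ W, ⁅x, w⁆ ∈ W)
    (hWneg : ∀ x ∈ Lneg, ∀ w ∈ W, ⁅x, w⁆ = (0 : V)) :
    (∀ x : L, ∀ u ∈ ⨆ j : ℕ, Wseq k L V Lpos W j, ⁅x, u⁆ ∈ ⨆ j : ℕ, Wseq k L V Lpos W j) ∧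
    ((∀ U' : Submodule k V, (∀ x : L, ∀ v ∈ U', ⁅x, v⁆ ∈ U') → U' = ⊥ ∨ U' = ⊤) →
      W ≠ ⊥ → (⨆ j : ℕ, Wseq k L V Lpos W j) = ⊤) :=
  stmt_9_general k L V Lneg Lzero Lpos hsum hnp hzp W hWzero hWneg
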